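/- arXiv:1605.01708 — 2 statements merged into one kernel-verified Lean document; each statement's English description precedes it below -/
import Mathlib

section
/- Let π be a permutation of {1,...,q} with peak set exactly S, and let i_s = max(S). Then the permutation of {1,...,q+1} obtained by inserting the value q+1 into position i_s (shifting π_{i_s},...,π_q one position to the right) has peak set exactly S. -/
/-- The peak set (1-based indices) of a list: `i` is a peak if `1 < i < length`
and the `(i-1)`-st entry is less than the `i`-th, which is greater than the `(i+1)`-st. -/
def peaks (l : List ℕ) : Finset ℕ :=
  (Finset.Icc 2 (l.length - 1)).filter (fun i =>
    l.getD (i - 2) 0 < l.getD (i - 1) 0 ∧ l.getD i 0 < l.getD (i - 1) 0)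

/-- `l` is (the one-line notation of) a permutation of `{1,...,n}`. -/
def IsPermOf (n : ℕ) (l : List ℕ) : Prop := l.Perm (List.range' 1 n)

/-- The number of permutations of `{1,...,n}` with peak set exactly `S`. -/
noncomputable def numPerms (n : ℕ) (S : Finset ℕ) : ℕ :=
  {l : List ℕ | IsPermOf n l ∧ peaks l = S}.ncard

/-- `S` is `n`-admissible: some permutation of `{1,...,n}` has peak set exactly `S`. -/
def Admissible (n : ℕ) (S : Finset ℕ) : Prop :=
  ∃ l : List ℕ, IsPermOf n l ∧ peaks l = S


/-! Inserting `q + 1` at the largest peak `m` of `π` makes position `m` a peak (its new value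
is maximal) and leaves positions `< m - 1` untouched. Positions `m - 1` and `m + 1` are not peaks
since they are next to the maximum, and they were not peaks of `π` either: `m - 1` because peaks
are never adjacent, `m + 1` by maximality of `m`. A position `i ≥ m + 2` sees the window of `π`
at `i - 1 > m`, so it is no peak on either side. -/

namespace List

theorem getD_insertIdx {α : Type*} {l : List α} {n : ℕ} (hn : n ≤ l.length) (x d : α) (k : ℕ) :
    (l.insertIdx n x).getD k d =
      if k < n then l.getD k d else if k = n then x else l.getD (k - 1) d := by
  simp only [getD_eq_getElem?_getD, getElem?_insertIdx]
  split_ifs <;> first | rfl | omega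

theorem getD_le_of_forall_le {l : List ℕ} {x : ℕ} (h : ∀ y ∈ l, y ≤ x) (k : ℕ) :
    l.getD k 0 ≤ x := by
  rw [getD_eq_getElem?_getD]
  cases hk : l[k]? with
  | none => exact Nat.zero_le x
  | some y => exact h y (mem_of_getElem? hk)

end List

theorem mem_peaks {l : List ℕ} {i : ℕ} :
    i ∈ peaks l ↔ 2 ≤ i ∧ i < l.length ∧
      l.getD (i - 2) 0 < l.getD (i - 1) 0 ∧ l.getD i 0 < l.getD (i - 1) 0 := by
  rw [peaks, Finset.mem_filter, Finset.mem_Icc]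
  omega

theorem add_one_notMem_peaks {l : List ℕ} {i : ℕ} (h : i ∈ peaks l) : i + 1 ∉ peaks l := by
  intro h'
  have hi := (mem_peaks.1 h).2.2.2
  have hi' := (mem_peaks.1 h').2.2.1
  rw [Nat.add_sub_cancel, show i + 1 - 2 = i - 1 by omega] at hi'
  omega

section insertIdx

/- `l.insertIdx n x` puts `x` at the 0-based index `n`, which is the 1-based position `n + 1`
used by `peaks`. -/

variable {l : List ℕ} {n : ℕ} {x : ℕ}

theorem mem_peaks_insertIdx_of_lt (hn : n ≤ l.length) {i : ℕ} (hi : i < n) :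
    i ∈ peaks (l.insertIdx n x) ↔ i ∈ peaks l := by
  simp only [mem_peaks, List.getD_insertIdx hn, List.length_insertIdx_of_le_length hn,
    if_pos (show i - 2 < n by omega), if_pos (show i - 1 < n by omega), if_pos hi]
  omega

theorem mem_peaks_insertIdx_of_add_three_le (hn : n ≤ l.length) {i : ℕ} (hi : n + 3 ≤ i) :
    i ∈ peaks (l.insertIdx n x) ↔ i - 1 ∈ peaks l := by
  simp only [mem_peaks, List.getD_insertIdx hn, List.length_insertIdx_of_le_length hn,
    if_neg (show ¬i - 2 < n by omega), if_neg (show i - 2 ≠ n by omega),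
    if_neg (show ¬i - 1 < n by omega), if_neg (show i - 1 ≠ n by omega),
    if_neg (show ¬i < n by omega), if_neg (show i ≠ n by omega),
    show i - 2 - 1 = i - 1 - 2 by omega, show i - 1 - 1 = i - 2 by omega]
  omega

theorem add_one_mem_peaks_insertIdx (hx : ∀ y ∈ l, y < x) (h1 : 1 ≤ n) (h2 : n < l.length) :
    n + 1 ∈ peaks (l.insertIdx n x) := by
  have hlt (k : ℕ) (hk : k < l.length) : l.getD k 0 < x := by
    rw [List.getD_eq_getElem _ _ hk]
    exact hx _ (List.getElem_mem hk)
  simp only [mem_peaks, List.getD_insertIdx h2.le, List.length_insertIdx_of_le_length h2.le,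
    Nat.add_sub_cancel, if_pos (show n + 1 - 2 < n by omega), if_neg (lt_irrefl n),
    if_neg (show ¬n + 1 < n by omega), if_neg (show n + 1 ≠ n by omega)]
  exact ⟨by omega, by omega, hlt _ (by omega), hlt _ h2⟩

theorem self_notMem_peaks_insertIdx (hn : n ≤ l.length) (hx : ∀ y ∈ l, y ≤ x) :
    n ∉ peaks (l.insertIdx n x) := by
  intro h
  obtain ⟨h2, -, -, hlt⟩ := mem_peaks.1 h
  rw [List.getD_insertIdx hn, List.getD_insertIdx hn, if_neg (lt_irrefl n), if_pos rfl,
    if_pos (by omega)] at hlt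
  have := List.getD_le_of_forall_le hx (n - 1)
  omega

theorem add_two_notMem_peaks_insertIdx (hn : n ≤ l.length) (hx : ∀ y ∈ l, y ≤ x) :
    n + 2 ∉ peaks (l.insertIdx n x) := by
  intro h
  obtain ⟨-, -, hlt, -⟩ := mem_peaks.1 h
  rw [Nat.add_sub_cancel, List.getD_insertIdx hn, List.getD_insertIdx hn, if_neg (lt_irrefl n),
    if_pos rfl, if_neg (show ¬n + 2 - 1 < n by omega), if_neg (show n + 2 - 1 ≠ n by omega),
    show n + 2 - 1 - 1 = n by omega] at hlt
  have := List.getD_le_of_forall_le hx n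
  omega

end insertIdx

theorem IsPermOf.lt_of_mem {q : ℕ} {l : List ℕ} (hl : IsPermOf q l) {y : ℕ} (hy : y ∈ l) :
    y < q + 1 := by
  have := List.mem_range'_1.1 (hl.mem_iff.1 hy)
  omega

theorem stmt_10 (q : ℕ) (l : List ℕ) (hl : IsPermOf q l) (S : Finset ℕ) (hS : S.Nonempty)
    (hpk : peaks l = S) :
    peaks (l.insertIdx (S.max' hS - 1) (q + 1)) = S := by
  subst hpk
  have hmax := (peaks l).max'_mem hS
  obtain ⟨n, hn⟩ : ∃ n, (peaks l).max' hS = n + 1 :=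
    ⟨_, (Nat.sub_add_cancel (one_le_two.trans (mem_peaks.1 hmax).1)).symm⟩
  rw [hn] at hmax ⊢
  rw [Nat.add_sub_cancel]
  have hbeyond (j : ℕ) (hj : n + 1 < j) : j ∉ peaks l :=
    fun h => absurd (hn ▸ (peaks l).le_max' j h) (by omega)
  obtain ⟨h2, hlen, -⟩ := mem_peaks.1 hmax
  have hlt (y : ℕ) (hy : y ∈ l) : y < q + 1 := hl.lt_of_mem hy
  have hle (y : ℕ) (hy : y ∈ l) : y ≤ q + 1 := (hlt y hy).le
  have hnl : n ≤ l.length := by omega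
  ext i
  obtain hi | rfl | rfl | rfl | hi : i < n ∨ i = n ∨ i = n + 1 ∨ i = n + 2 ∨ n + 3 ≤ i := by
    omega
  · exact mem_peaks_insertIdx_of_lt hnl hi
  · exact iff_of_false (self_notMem_peaks_insertIdx hnl hle) (add_one_notMem_peaks · hmax)
  · exact iff_of_true (add_one_mem_peaks_insertIdx hlt (by omega) (by omega)) hmax
  · exact iff_of_false (add_two_notMem_peaks_insertIdx hnl hle) (hbeyond _ (by omega))
  · rw [mem_peaks_insertIdx_of_add_three_le hnl hi]
    exact iff_of_false (hbeyond _ (by omega)) (hbeyond _ (by omega))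
end

section
/- For all n ≥ 4 and p_{{2}}(x) = x − 2: the numbers a(n) = |P_{{2}}(n)| satisfy the recurrence a(n+1) = 2·a(n) + 2^{n-1}, with a(3) = 2. -/
/-!
Write an arrangement of `insert M s`, where `M` exceeds every element of `s`, as `l₁ ++ M :: l₂`;
if `l₁` and `l₂` are both nonempty then `M` is a peak. So a peak-free arrangement is `M :: w` or
`w ++ [M]` with `w` peak-free, and `s` has `2 ^ (#s - 1)` peak-free arrangements. An arrangement
with peak set `{2}` is either `w ++ [M]` with `w` of peak set `{2}`, or `a :: M :: w` with `w` a
peak-free arrangement of `s.erase a`. Hence the number `f k` of arrangements of a `k`-set with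
peak set `{2}` satisfies `f (k + 1) = f k + k * 2 ^ (k - 2)` for `k ≥ 2`, so
`f k = (k - 2) * 2 ^ (k - 2)`.
-/

open Finset

theorem getD_mem_of_lt_length {α : Type*} {l : List α} (d : α) {i : ℕ} (h : i < l.length) :
    l.getD i d ∈ l := by
  rw [List.getD_eq_getElem _ _ h]
  exact List.getElem_mem h

theorem concat_ne_append {α : Type*} {x : α} {u w v : List α} (hv : v ≠ []) (hx : x ∉ v) :
    u ++ [x] ≠ w ++ v := fun h => by
  have := congrArg List.getLast? h
  rw [List.getLast?_concat, List.getLast?_append_of_ne_nil _ hv] at this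
  exact hx (List.mem_of_getLast? this.symm)

section Peaks

theorem two_le_of_mem_peaks {l : List ℕ} {i : ℕ} (h : i ∈ peaks l) : 2 ≤ i := by
  simp only [peaks, mem_filter, mem_Icc] at h
  exact h.1.1

theorem lt_length_of_mem_peaks {l : List ℕ} {i : ℕ} (h : i ∈ peaks l) : i < l.length := by
  simp only [peaks, mem_filter, mem_Icc] at h
  omega

theorem peaks_eq_empty_of_length_le_two {l : List ℕ} (hl : l.length ≤ 2) : peaks l = ∅ :=
  eq_empty_of_forall_notMem fun i hi => by
    have := two_le_of_mem_peaks hi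
    have := lt_length_of_mem_peaks hi
    omega

theorem add_two_mem_peaks {l : List ℕ} {i : ℕ} :
    i + 2 ∈ peaks l ↔ i + 2 < l.length ∧
      l.getD i 0 < l.getD (i + 1) 0 ∧ l.getD (i + 2) 0 < l.getD (i + 1) 0 := by
  simp only [peaks, mem_filter, mem_Icc, Nat.add_sub_cancel, show i + 2 - 1 = i + 1 by omega]
  omega

theorem peaks_cons (x : ℕ) (l : List ℕ) :
    peaks (x :: l) = (peaks l).image (· + 1) ∪
      if 2 ≤ l.length ∧ x < l.getD 0 0 ∧ l.getD 1 0 < l.getD 0 0 then {2} else ∅ := by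
  have hshift : ∀ k ∈ peaks l, 2 < k + 1 := fun k hk => by
    have := two_le_of_mem_peaks hk; omega
  ext i
  rcases Nat.lt_or_ge i 2 with hi | hi
  · have h1 : i ∉ peaks (x :: l) := fun h => by have := two_le_of_mem_peaks h; omega
    split_ifs <;> simp only [h1, false_iff, mem_union, mem_image, mem_singleton] <;> grind
  obtain ⟨j, rfl⟩ := Nat.exists_eq_add_of_le' hi
  rcases j with _ | k
  · rw [add_two_mem_peaks]
    split_ifs <;> simp only [mem_union, mem_image, mem_singleton] <;> grind
  · rw [show k + 1 + 2 = (k + 2) + 1 by omega, add_two_mem_peaks]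
    split_ifs <;> simp [add_two_mem_peaks] <;> omega

variable {M : ℕ}

theorem peaks_cons_of_forall_lt {w : List ℕ} (hM : ∀ y ∈ w, y < M) :
    peaks (M :: w) = (peaks w).image (· + 1) := by
  rw [peaks_cons, if_neg, union_empty]
  rintro ⟨hlen, hlt, -⟩
  exact (hM _ (getD_mem_of_lt_length 0 (by omega))).not_gt hlt

theorem peaks_cons_cons_of_forall_lt {a : ℕ} {w : List ℕ} (ha : a < M) (hw : w ≠ [])
    (hM : ∀ y ∈ w, y < M) :
    peaks (a :: M :: w) = (peaks w).image (· + 2) ∪ {2} := by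
  have h0 : 0 < w.length := List.length_pos_iff.2 hw
  have := hM _ (getD_mem_of_lt_length 0 h0)
  rw [peaks_cons, peaks_cons_of_forall_lt hM, image_image, if_pos]
  · rfl
  · simp only [List.length_cons, List.getD_cons_zero, List.getD_cons_succ]
    omega

theorem peaks_concat_of_forall_lt {w : List ℕ} (hM : ∀ y ∈ w, y < M) :
    peaks (w ++ [M]) = peaks w := by
  ext i
  rcases Nat.lt_or_ge i 2 with hi | hi
  · constructor <;> intro h <;> have := two_le_of_mem_peaks h <;> omega
  obtain ⟨j, rfl⟩ := Nat.exists_eq_add_of_le' hi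
  rw [add_two_mem_peaks, add_two_mem_peaks, List.length_append, List.length_singleton]
  rcases Nat.lt_or_ge (j + 2) w.length with h | h
  · rw [List.getD_append _ _ _ _ (by omega), List.getD_append _ _ _ _ (by omega),
      List.getD_append _ _ _ _ h]
    omega
  · refine ⟨fun ⟨hlen, _, hlt⟩ => ?_, fun ⟨hlen, _⟩ => by omega⟩
    have hj : j + 1 < w.length := by omega
    have := hM _ (getD_mem_of_lt_length 0 hj)
    rw [List.getD_append _ _ _ _ hj, List.getD_append_right _ _ _ _ h,
      show j + 2 - w.length = 0 by omega, List.getD_cons_zero] at hlt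
    omega

theorem mem_peaks_of_forall_lt {l₁ l₂ : List ℕ} (h₁ : l₁ ≠ []) (h₂ : l₂ ≠ [])
    (hM₁ : ∀ y ∈ l₁, y < M) (hM₂ : ∀ y ∈ l₂, y < M) :
    l₁.length + 1 ∈ peaks (l₁ ++ M :: l₂) := by
  obtain ⟨j, hj⟩ : ∃ j, l₁.length = j + 1 := Nat.exists_eq_succ_of_ne_zero (by simpa using h₁)
  have hlt₁ := hM₁ _ (getD_mem_of_lt_length 0 (show j < l₁.length by omega))
  have hlt₂ := hM₂ _ (getD_mem_of_lt_length 0 (List.length_pos_iff.2 h₂))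
  rw [hj, add_two_mem_peaks, List.getD_append _ _ _ _ (by omega),
    List.getD_append_right _ _ _ (j + 1) (by omega),
    List.getD_append_right _ _ _ (j + 2) (by omega),
    hj, Nat.sub_self, show j + 2 - (j + 1) = 0 + 1 by omega, List.getD_cons_zero,
    List.getD_cons_succ, List.length_append, List.length_cons, hj]
  exact ⟨by have := List.length_pos_iff.2 h₂; omega, hlt₁, hlt₂⟩

end Peaks

section Arrangements

variable {α : Type*}

def arrangements (s : Finset α) : Finset (List α) :=
  ⟨s.val.lists, Multiset.lists_nodup_finset s⟩

theorem mem_arrangements {s : Finset α} {l : List α} :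
    l ∈ arrangements s ↔ (l : Multiset α) = s.val :=
  (Multiset.mem_lists_iff _ _).trans eq_comm

theorem mem_of_mem_arrangements {s : Finset α} {l : List α} (hl : l ∈ arrangements s)
    {y : α} (hy : y ∈ l) : y ∈ s := by
  rw [← mem_val, ← mem_arrangements.1 hl]
  exact Multiset.mem_coe.2 hy

theorem length_of_mem_arrangements {s : Finset α} {l : List α} (hl : l ∈ arrangements s) :
    l.length = #s := by
  rw [← Multiset.coe_card, mem_arrangements.1 hl, card_val]

theorem arrangements_empty : arrangements (∅ : Finset α) = {[]} := by
  ext l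
  rw [mem_arrangements, mem_singleton, empty_val, Multiset.coe_eq_zero]

variable [DecidableEq α]

theorem cons_mem_arrangements {s : Finset α} {a : α} {w : List α} :
    a :: w ∈ arrangements s ↔ a ∈ s ∧ w ∈ arrangements (s.erase a) := by
  simp only [mem_arrangements, erase_val, ← Multiset.cons_coe]
  constructor
  · intro h
    refine ⟨by rw [← mem_val, ← h]; exact Multiset.mem_cons_self _ _, ?_⟩
    rw [← h, Multiset.erase_cons_head]
  · rintro ⟨ha, h⟩
    rw [h, Multiset.cons_erase (mem_val.mpr ha)]

theorem mem_arrangements_insert {s : Finset α} {M : α} (hM : M ∉ s) {l : List α} :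
    l ∈ arrangements (insert M s) ↔
      ∃ l₁ l₂, l = l₁ ++ M :: l₂ ∧ l₁ ++ l₂ ∈ arrangements s := by
  have hmiddle : ∀ l₁ l₂ : List α, ((l₁ ++ M :: l₂ : List α) : Multiset α) = M ::ₘ ↑(l₁ ++ l₂) :=
    fun _ _ => Multiset.coe_eq_coe.2 List.perm_middle
  simp only [mem_arrangements, insert_val_of_notMem hM]
  constructor
  · intro h
    obtain ⟨l₁, l₂, rfl⟩ := List.append_of_mem (Multiset.mem_coe.1 (h ▸ Multiset.mem_cons_self _ _))
    exact ⟨l₁, l₂, rfl, (Multiset.cons_inj_right M).1 (hmiddle l₁ l₂ ▸ h)⟩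
  · rintro ⟨l₁, l₂, rfl, h⟩
    rw [hmiddle, h]

end Arrangements

def arrangementsWithPeaks (s P : Finset ℕ) : Finset (List ℕ) :=
  (arrangements s).filter (peaks · = P)

theorem numPerms_eq_card (n : ℕ) (S : Finset ℕ) :
    numPerms n S = #(arrangementsWithPeaks (Icc 1 n) S) := by
  rw [numPerms, ← Set.ncard_coe_finset]
  congr 1
  ext l
  simp only [Set.mem_ofPred_eq, arrangementsWithPeaks, coe_filter, mem_arrangements, IsPermOf]
  rw [← Multiset.coe_eq_coe]
  rfl

section Recursion

variable {s : Finset ℕ} {M : ℕ}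

theorem forall_lt_of_mem_arrangements (hM : ∀ x ∈ s, x < M) {t : Finset ℕ} (ht : t ⊆ s)
    {w : List ℕ} (hw : w ∈ arrangements t) : ∀ y ∈ w, y < M :=
  fun y hy => hM y (ht (mem_of_mem_arrangements hw hy))

theorem exists_eq_append_cons_of_mem_arrangements_insert (hM : ∀ x ∈ s, x < M) {l : List ℕ}
    (hl : l ∈ arrangements (insert M s)) :
    ∃ l₁ l₂, l = l₁ ++ M :: l₂ ∧ l₁ ++ l₂ ∈ arrangements s ∧
      (l₁ ≠ [] → l₂ ≠ [] → l₁.length + 1 ∈ peaks l) := by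
  obtain ⟨l₁, l₂, rfl, h⟩ := (mem_arrangements_insert fun h => (hM M h).false).1 hl
  have hlt := forall_lt_of_mem_arrangements hM subset_rfl h
  exact ⟨l₁, l₂, rfl, h, fun h₁ h₂ => mem_peaks_of_forall_lt h₁ h₂
    (fun y hy => hlt y (by simp [hy])) fun y hy => hlt y (by simp [hy])⟩

theorem arrangementsWithPeaks_insert_empty (hM : ∀ x ∈ s, x < M) :
    arrangementsWithPeaks (insert M s) ∅ =
      (arrangementsWithPeaks s ∅).image (M :: ·) ∪
        (arrangementsWithPeaks s ∅).image (· ++ [M]) := by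
  have hMs : M ∉ s := fun h => (hM M h).false
  have hlt := @forall_lt_of_mem_arrangements s M hM s subset_rfl
  ext l
  simp only [arrangementsWithPeaks, mem_union, mem_image, mem_filter]
  constructor
  · rintro ⟨hl, hp⟩
    obtain ⟨l₁, l₂, rfl, h, hpeak⟩ := exists_eq_append_cons_of_mem_arrangements_insert hM hl
    rcases eq_or_ne l₁ [] with rfl | h₁
    · rw [List.nil_append] at h hp ⊢
      rw [peaks_cons_of_forall_lt (hlt h), image_eq_empty] at hp
      exact .inl ⟨l₂, ⟨h, hp⟩, rfl⟩
    rcases eq_or_ne l₂ [] with rfl | h₂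
    · rw [List.append_nil] at h
      rw [peaks_concat_of_forall_lt (hlt h)] at hp
      exact .inr ⟨l₁, ⟨h, hp⟩, rfl⟩
    · exact absurd (hp ▸ hpeak h₁ h₂) (notMem_empty _)
  · rintro (⟨w, ⟨hw, hp⟩, rfl⟩ | ⟨w, ⟨hw, hp⟩, rfl⟩)
    · refine ⟨(mem_arrangements_insert hMs).2 ⟨[], w, rfl, hw⟩, ?_⟩
      rw [peaks_cons_of_forall_lt (hlt hw), hp, image_empty]
    · refine ⟨(mem_arrangements_insert hMs).2 ⟨w, [], rfl, by rwa [List.append_nil]⟩, ?_⟩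
      rw [peaks_concat_of_forall_lt (hlt hw), hp]

theorem card_arrangementsWithPeaks_empty (s : Finset ℕ) :
    #(arrangementsWithPeaks s ∅) = 2 ^ (#s - 1) := by
  induction s using Finset.induction_on_max with
  | empty => rw [arrangementsWithPeaks, arrangements_empty, filter_singleton, if_pos (by rfl)]; rfl
  | insert M s hM ih =>
    have hMs : M ∉ s := fun h => (hM M h).false
    rw [arrangementsWithPeaks_insert_empty hM, card_insert_of_notMem hMs]
    have hlen : ∀ w ∈ arrangementsWithPeaks s ∅, w.length = #s :=
      fun w hw => length_of_mem_arrangements (mem_filter.1 hw).1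
    rcases s.eq_empty_or_nonempty with rfl | hs
    · have hends : Set.EqOn (M :: ·) (· ++ [M]) (arrangementsWithPeaks ∅ ∅) := fun w hw => by
        simp [List.eq_nil_of_length_eq_zero (hlen w hw)]
      rw [image_congr hends, union_self, card_image_of_injective _ (List.append_left_injective _),
        ih, card_empty]
    rw [card_union_of_disjoint, card_image_of_injective _ List.cons_injective,
      card_image_of_injective _ (List.append_left_injective _), ih]
    · have := hs.card_pos
      rw [← two_mul, ← pow_succ']
      congr 1
      omega
    · simp only [disjoint_left, mem_image, not_exists, not_and]
      rintro _ ⟨w, hw, rfl⟩ w' - h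
      have hw' := (mem_filter.1 hw).1
      refine concat_ne_append (u := w') (w := [M]) ?_ ?_ h
      · rw [← List.length_pos_iff, length_of_mem_arrangements hw']
        exact hs.card_pos
      · exact fun h => hMs (mem_of_mem_arrangements hw' h)

theorem arrangementsWithPeaks_insert_two (hM : ∀ x ∈ s, x < M) (hs : 2 ≤ #s) :
    arrangementsWithPeaks (insert M s) {2} =
      (arrangementsWithPeaks s {2}).image (· ++ [M]) ∪
        s.biUnion fun a => (arrangementsWithPeaks (s.erase a) ∅).image (a :: M :: ·) := by
  have hMs : M ∉ s := fun h => (hM M h).false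
  have hlt := @forall_lt_of_mem_arrangements s M hM
  ext l
  simp only [arrangementsWithPeaks, mem_union, mem_image, mem_filter, mem_biUnion]
  constructor
  · rintro ⟨hl, hp⟩
    obtain ⟨l₁, l₂, rfl, h, hpeak⟩ := exists_eq_append_cons_of_mem_arrangements_insert hM hl
    rcases eq_or_ne l₁ [] with rfl | h₁
    · rw [List.nil_append] at h hp
      rw [peaks_cons_of_forall_lt (hlt subset_rfl h)] at hp
      obtain ⟨k, hk, hk2⟩ := mem_image.1 (hp ▸ mem_singleton_self 2 : 2 ∈ (peaks l₂).image _)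
      exact absurd (two_le_of_mem_peaks hk) (by omega)
    rcases eq_or_ne l₂ [] with rfl | h₂
    · rw [List.append_nil] at h
      rw [peaks_concat_of_forall_lt (hlt subset_rfl h)] at hp
      exact .inl ⟨l₁, ⟨h, hp⟩, rfl⟩
    obtain ⟨a, rfl⟩ : ∃ a, l₁ = [a] := by
      have := mem_singleton.1 (hp ▸ hpeak h₁ h₂)
      exact List.length_eq_one_iff.1 (by omega)
    obtain ⟨ha, h⟩ := cons_mem_arrangements.1 h
    refine .inr ⟨a, ha, l₂, ⟨h, ?_⟩, rfl⟩
    refine eq_empty_of_forall_notMem fun k hk => ?_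
    have hk2 : k + 2 ∈ peaks (a :: M :: l₂) := by
      rw [peaks_cons_cons_of_forall_lt (hM a ha) h₂ (hlt (erase_subset a s) h)]
      exact mem_union_left _ (mem_image_of_mem _ hk)
    have := two_le_of_mem_peaks hk
    simp only [List.cons_append, List.nil_append] at hp
    rw [hp, mem_singleton] at hk2
    omega
  · rintro (⟨w, ⟨hw, hp⟩, rfl⟩ | ⟨a, ha, w, ⟨hw, hp⟩, rfl⟩)
    · refine ⟨(mem_arrangements_insert hMs).2 ⟨w, [], rfl, by rwa [List.append_nil]⟩, ?_⟩
      rw [peaks_concat_of_forall_lt (hlt subset_rfl hw), hp]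
    · refine ⟨(mem_arrangements_insert hMs).2 ⟨[a], w, rfl, cons_mem_arrangements.2 ⟨ha, hw⟩⟩, ?_⟩
      have hw₀ : w ≠ [] := by
        rw [← List.length_pos_iff, length_of_mem_arrangements hw, card_erase_of_mem ha]
        omega
      rw [peaks_cons_cons_of_forall_lt (hM a ha) hw₀
        (hlt (erase_subset a s) hw), hp, image_empty, empty_union]

theorem arrangementsWithPeaks_two_of_card_le_two (hs : #s ≤ 2) :
    arrangementsWithPeaks s {2} = ∅ :=
  filter_false_of_mem fun l hl => by
    rw [peaks_eq_empty_of_length_le_two (length_of_mem_arrangements hl ▸ hs)]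
    exact (singleton_ne_empty 2).symm

theorem card_arrangementsWithPeaks_two (s : Finset ℕ) :
    #(arrangementsWithPeaks s {2}) = (#s - 2) * 2 ^ (#s - 2) := by
  induction s using Finset.induction_on_max with
  | empty => rw [arrangementsWithPeaks_two_of_card_le_two (by simp), card_empty, card_empty]; rfl
  | insert M s hM ih =>
    have hMs : M ∉ s := fun h => (hM M h).false
    rw [card_insert_of_notMem hMs]
    rcases Nat.lt_or_ge #s 2 with hs | hs
    · rw [arrangementsWithPeaks_two_of_card_le_two (by rw [card_insert_of_notMem hMs]; omega),
        card_empty, show #s + 1 - 2 = 0 by omega, zero_mul]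
    have hne : ∀ a ∈ s, ∀ w ∈ arrangementsWithPeaks (s.erase a) ∅, w ≠ [] ∧ M ∉ w := by
      intro a ha w hw
      have hw' := (mem_filter.1 hw).1
      refine ⟨?_, fun h => hMs (mem_of_mem_arrangements hw' h |> mem_of_mem_erase)⟩
      rw [← List.length_pos_iff, length_of_mem_arrangements hw', card_erase_of_mem ha]
      omega
    rw [arrangementsWithPeaks_insert_two hM hs, card_union_of_disjoint,
      card_image_of_injective _ (List.append_left_injective _), ih, card_biUnion]
    · rw [sum_congr rfl fun a ha => by
          rw [card_image_of_injective _ fun _ _ h => List.tail_eq_of_cons_eq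
            (List.tail_eq_of_cons_eq h), card_arrangementsWithPeaks_empty, card_erase_of_mem ha],
        sum_const, smul_eq_mul]
      obtain ⟨k, hk⟩ := Nat.exists_eq_add_of_le hs
      rw [hk, show 2 + k - 1 - 1 = k by omega, show 2 + k + 1 - 2 = k + 1 by omega,
        show 2 + k - 2 = k by omega, pow_succ]
      ring
    · intro a _ b _ hab
      simp only [Function.onFun, disjoint_left, mem_image, not_exists, not_and]
      rintro _ ⟨w, -, rfl⟩ w' - h
      exact hab (List.head_eq_of_cons_eq h).symm
    · simp only [disjoint_left, mem_image, mem_biUnion, not_exists, not_and]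
      rintro _ ⟨w, -, rfl⟩ a ha w' hw' h
      exact concat_ne_append (w := [a, M]) (hne a ha w' hw').1 (hne a ha w' hw').2 h.symm

end Recursion

theorem numPerms_two (n : ℕ) : numPerms n {2} = (n - 2) * 2 ^ (n - 2) := by
  rw [numPerms_eq_card, card_arrangementsWithPeaks_two, Nat.card_Icc, Nat.add_sub_cancel]

theorem stmt_17 :
    numPerms 3 {2} = 2 ∧
      ∀ n : ℕ, 4 ≤ n → numPerms (n + 1) {2} = 2 * numPerms n {2} + 2 ^ (n - 1) := by
  refine ⟨by rw [numPerms_two]; rfl, fun n hn => ?_⟩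
  obtain ⟨k, rfl⟩ := Nat.exists_eq_add_of_le hn
  rw [numPerms_two, numPerms_two, show 4 + k + 1 - 2 = k + 3 by omega,
    show 4 + k - 2 = k + 2 by omega, show 4 + k - 1 = k + 3 by omega]
  ring
end
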